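/- Let $\lambda_1, \dots, \lambda_n$ be real numbers with $\sum_i \lambda_i = 0$ ($n \ge 2$). Then $\sum_i \lambda_i^3 \ge -\frac{n-2}{\sqrt{n(n-1)}} \left( \sum_i \lambda_i^2 \right)^{3/2}$. -/

import Mathlib

/-!
Mean zero bounds every entry from below by `-√((n-1)/n · ∑ λᵢ²)` (Cauchy–Schwarz on the other
`n - 1` entries). For `α, β` with `λᵢ ≥ -β` the cubic `(x - α)² (x + β)` is nonnegative at every
`λᵢ`; summing and using `∑ λᵢ = 0` gives a lower bound for `∑ λᵢ³` in terms of `∑ λᵢ²`.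
With `β = (n - 1) α` and `α = √(∑ λᵢ² / (n(n-1)))`, the extremal configuration
`(α, …, α, -β)`, this bound is the claimed one.
-/

open Finset

lemma card_mul_sq_le_of_sum_eq_zero {ι : Type*} [Fintype ι] {l : ι → ℝ}
    (hsum : ∑ i, l i = 0) (i : ι) :
    Fintype.card ι * l i ^ 2 ≤ (Fintype.card ι - 1) * ∑ j, l j ^ 2 := by
  classical
  have hrest : ∑ j ∈ univ.erase i, l j = -l i := by
    linarith [add_sum_erase univ l (mem_univ i)]
  have hrest_sq : ∑ j ∈ univ.erase i, l j ^ 2 = ∑ j, l j ^ 2 - l i ^ 2 := by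
    linarith [add_sum_erase univ (l · ^ 2) (mem_univ i)]
  have hcard : ((univ.erase i).card : ℝ) = Fintype.card ι - 1 := by
    rw [card_erase_of_mem (mem_univ i), card_univ, Nat.cast_pred (Fintype.card_pos_iff.2 ⟨i⟩)]
  have hcs := sq_sum_le_card_mul_sum_sq (s := univ.erase i) (f := l)
  rw [hrest, hcard, hrest_sq] at hcs
  linarith

lemma neg_le_of_sum_eq_zero {ι : Type*} [Fintype ι] {l : ι → ℝ} (hsum : ∑ i, l i = 0)
    {β : ℝ} (hβ : 0 ≤ β) (hbound : (Fintype.card ι - 1) * ∑ j, l j ^ 2 ≤ Fintype.card ι * β ^ 2)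
    (i : ι) : -β ≤ l i := by
  have hcard : (0 : ℝ) < Fintype.card ι := Nat.cast_pos.2 (Fintype.card_pos_iff.2 ⟨i⟩)
  have hsq : l i ^ 2 ≤ β ^ 2 :=
    le_of_mul_le_mul_left ((card_mul_sq_le_of_sum_eq_zero hsum i).trans hbound) hcard
  exact (abs_le_of_sq_le_sq' hsq hβ).1

lemma sum_pow_three_ge_of_forall_neg_le {ι : Type*} [Fintype ι] {l : ι → ℝ}
    (hsum : ∑ i, l i = 0) {α β : ℝ} (hβ : ∀ i, -β ≤ l i) :
    (2 * α - β) * ∑ i, l i ^ 2 - Fintype.card ι * α ^ 2 * β ≤ ∑ i, l i ^ 3 := by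
  have hnonneg : 0 ≤ ∑ i, (l i - α) ^ 2 * (l i + β) :=
    sum_nonneg fun i _ => mul_nonneg (sq_nonneg _) (by linarith [hβ i])
  have hexpand : ∑ i, (l i - α) ^ 2 * (l i + β) = ∑ i, l i ^ 3 + (β - 2 * α) * ∑ i, l i ^ 2
      + (α ^ 2 - 2 * α * β) * ∑ i, l i + Fintype.card ι * α ^ 2 * β := by
    have hconst : (Fintype.card ι : ℝ) * α ^ 2 * β = ∑ _i : ι, α ^ 2 * β := by
      simp only [sum_const, card_univ, nsmul_eq_mul, mul_assoc]
    rw [hconst, mul_sum, mul_sum, ← sum_add_distrib, ← sum_add_distrib, ← sum_add_distrib]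
    exact sum_congr rfl fun i _ => by ring
  rw [hexpand, hsum] at hnonneg
  linarith

/-- If `λ₁, …, λₙ` are reals with `∑ λᵢ = 0` (`n ≥ 2`), then
`∑ λᵢ³ ≥ -((n-2)/√(n(n-1))) (∑ λᵢ²)^{3/2}`. -/
theorem scalar_cubic_inequality (n : ℕ) (hn : 2 ≤ n)
    (l : Fin n → ℝ) (hsum : ∑ i, l i = 0) :
    ∑ i, (l i) ^ 3 ≥
      -((n - 2 : ℝ) / Real.sqrt (n * (n - 1))) * (∑ i, (l i) ^ 2) ^ ((3 : ℝ) / 2) := by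
  set s := ∑ i, l i ^ 2
  set t := √s
  set r := √(n * (n - 1) : ℝ)
  have hn' : (2 : ℝ) ≤ n := by exact_mod_cast hn
  have hs : 0 ≤ s := sum_nonneg fun i _ => sq_nonneg (l i)
  have ht2 : t ^ 2 = s := Real.sq_sqrt hs
  have hr : 0 < r := Real.sqrt_pos.2 (by nlinarith)
  have hr2 : r ^ 2 = n * (n - 1) := Real.sq_sqrt (by nlinarith)
  have hβ : ∀ i, -((n - 1) * (t / r)) ≤ l i := by
    refine neg_le_of_sum_eq_zero hsum (mul_nonneg (by linarith) (by positivity)) (le_of_eq ?_)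
    rw [Fintype.card_fin, mul_pow, div_pow, hr2, ht2]
    field_simp
    rfl
  calc ∑ i, l i ^ 3
      ≥ (2 * (t / r) - (n - 1) * (t / r)) * s - n * (t / r) ^ 2 * ((n - 1) * (t / r)) := by
        simpa using sum_pow_three_ge_of_forall_neg_le hsum hβ
    _ = -((n - 2) / r) * t ^ 3 := by
        field_simp
        linear_combination t ^ 3 * hr2 + ((n - 3) * t * r ^ 2) * ht2
    _ = _ := by rw [Real.rpow_div_two_eq_sqrt _ hs]; norm_cast
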